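/- Let Ω_1,…,Ω_r ∈ Mat_n(ℂ[[q^1,…,q^r]]) with p_a := Ω_a|_{q=0}, let e_0 ∈ ℂ^n satisfy Ω_a·e_0 = p_a·e_0 as vectors of power series for every a, and let S ∈ Mat_n(ℂ[[ħ^{-1}]][[q]]) be invertible with S|_{q=0} = Id and ħθ_a S + Ω_a S − S p_a = 0 for all a. Then S ≡ Id modulo ħ^{-1}, and writing S^{-1} = Id + ħ^{-1}S_1 + ħ^{-2}S_2 + ⋯ with S_k ∈ Mat_n(ℂ[[q]]), one has S_1·e_0 = 0; equivalently S^{-1}e_0 ≡ e_0 modulo ħ^{-2}. -/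

import Mathlib

/-!
Work over ℂ.  We represent the coefficient ring `ℂ[ħ,ħ⁻¹]]` (formal Laurent
series `Σ_{k ≤ K} c_k ħ^k` with finitely many positive powers of `ħ`) as
`LaurentSeries ℂ` in the variable `t = ħ⁻¹`; thus the coefficient of `t^k`
is the coefficient of `ħ^{-k}`.  `AA r = ℂ[ħ,ħ⁻¹]][[q¹,…,qʳ]]`, and
`θ_a = qᵃ·∂/∂qᵃ` is the logarithmic partial derivative.
-/

noncomputable section

/-- `ℂ[ħ,ħ⁻¹]]`, realized as Laurent series in `t = ħ⁻¹`. -/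
abbrev LS := LaurentSeries ℂ

/-- `ħ = t⁻¹` where `t` is the `LaurentSeries` variable. -/
def hbarL : LS := HahnSeries.single (-1 : ℤ) (1 : ℂ)

/-- `ℂ[ħ,ħ⁻¹]][[q¹,…,qʳ]]`. -/
abbrev AA (r : ℕ) := MvPowerSeries (Fin r) LS

/-- The logarithmic derivative `θ_a = qᵃ ∂/∂qᵃ`:
on the monomial `q^d` it acts by multiplication by `d a`. -/
def thetaA {r : ℕ} (a : Fin r) (x : AA r) : AA r := fun d => (d a : LS) * x d

/-- `θ_a` acting entrywise on matrices. -/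
def thetaMat {r n : ℕ} (a : Fin r) (M : Matrix (Fin n) (Fin n) (AA r)) :
    Matrix (Fin n) (Fin n) (AA r) :=
  Matrix.of fun i j => thetaA a (M i j)

/-- `ħ` as an element of `ℂ[ħ,ħ⁻¹]][[q]]`. -/
def hbarA (r : ℕ) : AA r := (MvPowerSeries.C : LS →+* AA r) hbarL

/-- The constant term at `q = 0`. -/
def ccA {r : ℕ} : AA r →+* LS := MvPowerSeries.constantCoeff

/-- The embedding `ℂ → ℂ[ħ,ħ⁻¹]][[q]]`. -/
def cA (r : ℕ) : ℂ →+* AA r := (MvPowerSeries.C : LS →+* AA r).comp HahnSeries.C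

/-- `x ∈ ℂ[ħ]`: `x` is a polynomial in `ħ` (no negative powers of `ħ`,
i.e. no positive powers of `t`; finiteness is automatic for Laurent series). -/
def isPolyH (x : LS) : Prop := ∀ k : ℤ, 0 < k → x.coeff k = 0

/-- `x ∈ ℂ[[ħ⁻¹]]`: `x` is regular at `ħ = ∞` (no positive powers of `ħ`). -/
def isRegH (x : LS) : Prop := ∀ k : ℤ, k < 0 → x.coeff k = 0

/-- `x ∈ ℂ`: `x` is a constant, independent of `ħ`. -/
def isConstH (x : LS) : Prop := ∀ k : ℤ, k ≠ 0 → x.coeff k = 0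

/-- A matrix over `ℂ[ħ,ħ⁻¹]][[q]]` has entries in `ℂ[ħ][[q]]`. -/
def MatPolyH {r n : ℕ} (M : Matrix (Fin n) (Fin n) (AA r)) : Prop :=
  ∀ i j d, isPolyH (M i j d)

/-- A matrix over `ℂ[ħ,ħ⁻¹]][[q]]` has entries in `ℂ[[ħ⁻¹]][[q]]`. -/
def MatRegH {r n : ℕ} (M : Matrix (Fin n) (Fin n) (AA r)) : Prop :=
  ∀ i j d, isRegH (M i j d)

/-- A matrix over `ℂ[ħ,ħ⁻¹]][[q]]` has entries in `ℂ[[q]]`,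
i.e. is independent of `ħ`. -/
def MatConstH {r n : ℕ} (M : Matrix (Fin n) (Fin n) (AA r)) : Prop :=
  ∀ i j d, isConstH (M i j d)

/-- Flatness: `ħ(θ_aΩ_b − θ_bΩ_a) + Ω_aΩ_b − Ω_bΩ_a = 0` for all `a, b`. -/
def IsFlat {r n : ℕ} (Ω : Fin r → Matrix (Fin n) (Fin n) (AA r)) : Prop :=
  ∀ a b, hbarA r • (thetaMat a (Ω b) - thetaMat b (Ω a)) + (Ω a * Ω b - Ω b * Ω a) = 0

/-!
Expand `ħθ_a S + Ω_a S − S p_a = 0` in powers of `ħ⁻¹`, writing `S = S₀ + ħ⁻¹S₁ + ⋯`.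
The `ħ¹` part says `θ_a S₀ = 0`, so `S₀` is constant in `q`, hence `S₀ = S|_{q=0} = Id`.
The `ħ⁰` part then says `θ_a S₁ = p_a − Ω_a`, which kills `e₀`; so `S₁e₀` is constant in `q`,
hence `0`. Finally `S⁻¹` again has no positive powers of `ħ` (its determinant is a unit of
`ℂ[[ħ⁻¹]][[q]]`), and the `ħ⁰` and `ħ⁻¹` parts of `S⁻¹S = Id` give `(S⁻¹)₀ = Id` and
`(S⁻¹)₁ = −S₁`.
-/

lemma isRegH_iff_mem_range {x : LS} : isRegH x ↔ x ∈ (HahnSeries.ofPowerSeries ℤ ℂ).range := by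
  constructor
  · intro hx
    refine ⟨PowerSeries.mk fun m => x.coeff m, ?_⟩
    ext k
    rw [PowerSeries.coeff_coe]
    split_ifs with hk
    · exact (hx k hk).symm
    · simp [Int.natAbs_of_nonneg (not_lt.1 hk)]
  · rintro ⟨f, rfl⟩ k hk
    simp [PowerSeries.coeff_coe, hk]

lemma isRegH.exists_coe {x : LS} (hx : isRegH x) : ∃ f : PowerSeries ℂ, (f : LS) = x :=
  isRegH_iff_mem_range.1 hx

lemma isRegH.mul {x y : LS} (hx : isRegH x) (hy : isRegH y) : isRegH (x * y) :=
  isRegH_iff_mem_range.2 (Subring.mul_mem _ (isRegH_iff_mem_range.1 hx) (isRegH_iff_mem_range.1 hy))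

lemma isRegH.coeff_zero_mul {x y : LS} (hx : isRegH x) (hy : isRegH y) :
    (x * y).coeff 0 = x.coeff 0 * y.coeff 0 := by
  obtain ⟨f, rfl⟩ := hx.exists_coe
  obtain ⟨g, rfl⟩ := hy.exists_coe
  rw [← map_mul]
  simp only [PowerSeries.coeff_coe]
  simp

lemma isRegH.coeff_one_mul {x y : LS} (hx : isRegH x) (hy : isRegH y) :
    (x * y).coeff 1 = x.coeff 0 * y.coeff 1 + x.coeff 1 * y.coeff 0 := by
  obtain ⟨f, rfl⟩ := hx.exists_coe
  obtain ⟨g, rfl⟩ := hy.exists_coe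
  rw [← map_mul]
  simp only [PowerSeries.coeff_coe]
  simp [PowerSeries.coeff_mul, Finset.Nat.antidiagonal_succ]

lemma isConstH.isRegH {x : LS} (hx : isConstH x) : isRegH x :=
  fun k hk => hx k hk.ne

section HCoeff

variable {r : ℕ}

def hCoeff (r : ℕ) (k : ℤ) : AA r →+ MvPowerSeries (Fin r) ℂ where
  toFun x d := (x d).coeff k
  map_zero' := rfl
  map_add' _ _ := rfl

def isRegA (x : AA r) : Prop := ∀ d, isRegH (MvPowerSeries.coeff d x)

def thetaC (a : Fin r) : MvPowerSeries (Fin r) ℂ →+ MvPowerSeries (Fin r) ℂ where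
  toFun f d := (d a : ℂ) * f d
  map_zero' := funext fun _ => mul_zero _
  map_add' _ _ := funext fun _ => mul_add _ _ _

@[simp] lemma coeff_hCoeff (k : ℤ) (x : AA r) (d : Fin r →₀ ℕ) :
    MvPowerSeries.coeff d (hCoeff r k x) = (MvPowerSeries.coeff d x).coeff k := rfl

lemma isRegA.hCoeff_of_neg {x : AA r} (hx : isRegA x) {k : ℤ} (hk : k < 0) : hCoeff r k x = 0 := by
  ext d; exact hx d k hk

lemma isRegA.mul {x y : AA r} (hx : isRegA x) (hy : isRegA y) : isRegA (x * y) := by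
  intro d
  rw [MvPowerSeries.coeff_mul]
  exact isRegH_iff_mem_range.2 <| Subring.sum_mem _ fun e _ =>
    isRegH_iff_mem_range.1 ((hx e.1).mul (hy e.2))

lemma isRegA.hCoeff_zero_mul {x y : AA r} (hx : isRegA x) (hy : isRegA y) :
    hCoeff r 0 (x * y) = hCoeff r 0 x * hCoeff r 0 y := by
  ext d
  simp only [coeff_hCoeff, MvPowerSeries.coeff_mul, HahnSeries.coeff_sum]
  exact Finset.sum_congr rfl fun e _ => (hx e.1).coeff_zero_mul (hy e.2)

lemma isRegA.hCoeff_one_mul {x y : AA r} (hx : isRegA x) (hy : isRegA y) :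
    hCoeff r 1 (x * y) = hCoeff r 0 x * hCoeff r 1 y + hCoeff r 1 x * hCoeff r 0 y := by
  ext d
  simp only [map_add, coeff_hCoeff, MvPowerSeries.coeff_mul, HahnSeries.coeff_sum,
    ← Finset.sum_add_distrib]
  exact Finset.sum_congr rfl fun e _ => (hx e.1).coeff_one_mul (hy e.2)

lemma hCoeff_mul_cA (k : ℤ) (x : AA r) (c : ℂ) :
    hCoeff r k (x * cA r c) = hCoeff r k x * MvPowerSeries.C c := by
  ext d
  simp [cA, MvPowerSeries.coeff_mul_C]

lemma hCoeff_one (k : ℤ) : hCoeff r k 1 = if k = 0 then 1 else 0 := by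
  ext d
  by_cases hd : d = 0 <;> by_cases hk : k = 0 <;>
    simp [MvPowerSeries.coeff_one, hd, hk, HahnSeries.coeff_one]

lemma hCoeff_hbarA_mul_thetaA (k : ℤ) (a : Fin r) (x : AA r) :
    hCoeff r k (hbarA r * thetaA a x) = thetaC a (hCoeff r (k + 1) x) := by
  ext d
  rw [coeff_hCoeff, hbarA, MvPowerSeries.coeff_C_mul, hbarL, HahnSeries.coeff_single_mul]
  change 1 * (((d a : ℕ) : LS) * MvPowerSeries.coeff d x).coeff (k - -1) = (d a : ℂ) * _
  rw [← map_natCast HahnSeries.C, HahnSeries.C_mul_eq_smul, HahnSeries.coeff_smul, sub_neg_eq_add,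
    one_mul]
  rfl

end HCoeff

section Theta

open Matrix

variable {r : ℕ}

lemma coeff_thetaC (a : Fin r) (f : MvPowerSeries (Fin r) ℂ) (d : Fin r →₀ ℕ) :
    MvPowerSeries.coeff d (thetaC a f) = (d a : ℂ) * MvPowerSeries.coeff d f := rfl

lemma eq_C_constantCoeff_of_thetaC_eq_zero {f : MvPowerSeries (Fin r) ℂ}
    (hf : ∀ a, thetaC a f = 0) : f = MvPowerSeries.C (MvPowerSeries.constantCoeff f) := by
  ext d
  rw [MvPowerSeries.coeff_C]
  split_ifs with hd
  · rw [hd, MvPowerSeries.coeff_zero_eq_constantCoeff_apply]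
  · obtain ⟨a, ha⟩ := Finsupp.ne_iff.1 hd
    have h := congrArg (MvPowerSeries.coeff d) (hf a)
    rw [coeff_thetaC, map_zero] at h
    exact (mul_eq_zero.1 h).resolve_left (Nat.cast_ne_zero.2 ha)

lemma thetaC_mulVec_C {n : ℕ} (a : Fin r) (M : Matrix (Fin n) (Fin n) (MvPowerSeries (Fin r) ℂ))
    (v : Fin n → ℂ) (i : Fin n) :
    thetaC a ((M *ᵥ fun j => MvPowerSeries.C (v j)) i)
      = (M.map (thetaC a) *ᵥ fun j => MvPowerSeries.C (v j)) i := by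
  simp only [Matrix.mulVec, dotProduct, map_sum, Matrix.map_apply]
  refine Finset.sum_congr rfl fun j _ => ?_
  ext d
  simp only [coeff_thetaC, MvPowerSeries.coeff_mul_C, mul_assoc]

end Theta

section Matrix

open Matrix

variable {r n : ℕ}

lemma isRegA_sum {ι : Type*} (s : Finset ι) {f : ι → AA r} (hf : ∀ i ∈ s, isRegA (f i)) :
    isRegA (∑ i ∈ s, f i) := fun d => by
  rw [map_sum]
  exact isRegH_iff_mem_range.2 (Subring.sum_mem _ fun i hi => isRegH_iff_mem_range.1 (hf i hi d))

lemma MatRegH.mul {M N : Matrix (Fin n) (Fin n) (AA r)} (hM : MatRegH M) (hN : MatRegH N) :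
    MatRegH (M * N) := fun i j =>
  (isRegA_sum _ fun l _ => isRegA.mul (hM i l) (hN l j) : isRegA ((M * N) i j))

lemma MatRegH.map_hCoeff_of_neg {M : Matrix (Fin n) (Fin n) (AA r)} (hM : MatRegH M) {k : ℤ}
    (hk : k < 0) : M.map (hCoeff r k) = 0 := by
  ext i j : 1
  exact isRegA.hCoeff_of_neg (hM i j) hk

lemma MatRegH.map_hCoeff_zero_mul {M N : Matrix (Fin n) (Fin n) (AA r)} (hM : MatRegH M)
    (hN : MatRegH N) : (M * N).map (hCoeff r 0) = M.map (hCoeff r 0) * N.map (hCoeff r 0) := by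
  ext i j : 1
  simp only [Matrix.map_apply, Matrix.mul_apply, map_sum]
  exact Finset.sum_congr rfl fun l _ => isRegA.hCoeff_zero_mul (hM i l) (hN l j)

lemma MatRegH.map_hCoeff_one_mul {M N : Matrix (Fin n) (Fin n) (AA r)} (hM : MatRegH M)
    (hN : MatRegH N) : (M * N).map (hCoeff r 1) =
      M.map (hCoeff r 0) * N.map (hCoeff r 1) + M.map (hCoeff r 1) * N.map (hCoeff r 0) := by
  ext i j : 1
  simp only [Matrix.map_apply, Matrix.add_apply, Matrix.mul_apply, map_sum,
    ← Finset.sum_add_distrib]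
  exact Finset.sum_congr rfl fun l _ => isRegA.hCoeff_one_mul (hM i l) (hN l j)

lemma map_hCoeff_one (k : ℤ) :
    (1 : Matrix (Fin n) (Fin n) (AA r)).map (hCoeff r k) = if k = 0 then 1 else 0 := by
  split_ifs with hk
  · exact Matrix.map_one _ (map_zero _) (by rw [hCoeff_one, if_pos hk])
  · ext i j
    rw [Matrix.map_apply, Matrix.one_apply]
    split_ifs <;> simp [hCoeff_one, hk]

lemma hCoeff_mulVec_cA (k : ℤ) (M : Matrix (Fin n) (Fin n) (AA r)) (v : Fin n → ℂ) (i : Fin n) :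
    hCoeff r k ((M *ᵥ fun j => cA r (v j)) i)
      = (M.map (hCoeff r k) *ᵥ fun j => MvPowerSeries.C (v j)) i := by
  simp only [Matrix.mulVec, dotProduct, map_sum, Matrix.map_apply, hCoeff_mul_cA]

lemma map_hCoeff_hbarA_smul_thetaMat (k : ℤ) (a : Fin r) (M : Matrix (Fin n) (Fin n) (AA r)) :
    (hbarA r • thetaMat a M).map (hCoeff r k) = (M.map (hCoeff r (k + 1))).map (thetaC a) := by
  ext i j : 1
  exact hCoeff_hbarA_mul_thetaA k a (M i j)

lemma map_hCoeff_of_hbarA_smul_thetaMat_add_sub_eq_zero {a : Fin r}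
    {S A B : Matrix (Fin n) (Fin n) (AA r)} (h : hbarA r • thetaMat a S + A - B = 0) (k : ℤ) :
    (S.map (hCoeff r (k + 1))).map (thetaC a) + A.map (hCoeff r k) - B.map (hCoeff r k) = 0 := by
  have := congrArg (hCoeff r k).mapMatrix h
  rwa [map_sub, map_add, map_zero, AddMonoidHom.mapMatrix_apply, AddMonoidHom.mapMatrix_apply,
    AddMonoidHom.mapMatrix_apply, map_hCoeff_hbarA_smul_thetaMat] at this

end Matrix

section Inverse

open Matrix

variable {r n : ℕ}

lemma isRegA_iff_mem_range {x : AA r} :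
    isRegA x ↔ x ∈ (MvPowerSeries.map (HahnSeries.ofPowerSeries ℤ ℂ) :
      MvPowerSeries (Fin r) (PowerSeries ℂ) →+* AA r).range := by
  constructor
  · intro hx
    choose f hf using fun d => (hx d).exists_coe
    exact ⟨(f : MvPowerSeries (Fin r) (PowerSeries ℂ)), MvPowerSeries.ext hf⟩
  · rintro ⟨y, rfl⟩ d
    rw [MvPowerSeries.coeff_map]
    exact isRegH_iff_mem_range.2 ⟨_, rfl⟩

lemma isRegA_cA (c : ℂ) : isRegA (cA r c) :=
  isRegA_iff_mem_range.2 ⟨MvPowerSeries.C (PowerSeries.C c), by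
    simp [cA, MvPowerSeries.map_C, HahnSeries.ofPowerSeries_C]⟩

-- `det S` is a unit of `ℂ[[ħ⁻¹]][[q]]` because it is `1` at `q = 0`.
lemma MatRegH.of_mul_eq_one {S T : Matrix (Fin n) (Fin n) (AA r)} (hS : MatRegH S)
    (hScc : S.map ccA = 1) (hST : S * T = 1) : MatRegH T := by
  set ι : MvPowerSeries (Fin r) (PowerSeries ℂ) →+* AA r :=
    MvPowerSeries.map (HahnSeries.ofPowerSeries ℤ ℂ)
  choose S' hS' using fun i j => isRegA_iff_mem_range.1 (hS i j)
  have hS'ι : (Matrix.of S').map ι = S := Matrix.ext hS'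
  have hS'cc : (Matrix.of S').map MvPowerSeries.constantCoeff = 1 := by
    refine Matrix.map_injective (HahnSeries.ofPowerSeries_injective (Γ := ℤ)) ?_
    dsimp only
    rw [Matrix.map_one _ (map_zero _) (map_one _), ← hScc, ← hS'ι, Matrix.map_map, Matrix.map_map]
    rfl
  have hdet : IsUnit (Matrix.of S').det := by
    rw [MvPowerSeries.isUnit_iff_constantCoeff, RingHom.map_det, RingHom.mapMatrix_apply, hS'cc,
      det_one]
    exact isUnit_one
  have hT : T = (Matrix.of S')⁻¹.map ι := by
    calc T = ((Matrix.of S')⁻¹ * Matrix.of S').map ι * T := by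
          rw [nonsing_inv_mul _ hdet, Matrix.map_one _ (map_zero _) (map_one _), Matrix.one_mul]
      _ = (Matrix.of S')⁻¹.map ι := by
          rw [Matrix.map_mul, Matrix.mul_assoc, hS'ι, hST, Matrix.mul_one]
  rw [hT]
  exact fun i j => isRegA_iff_mem_range.2 ⟨_, rfl⟩

end Inverse

section CanonicalFrame

open Matrix

variable {r n : ℕ} {Ω P : Fin r → Matrix (Fin n) (Fin n) (AA r)} {S : Matrix (Fin n) (Fin n) (AA r)}

lemma map_constantCoeff_map_hCoeff (hScc : S.map ccA = 1) (k : ℤ) :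
    (S.map (hCoeff r k)).map MvPowerSeries.constantCoeff = if k = 0 then 1 else 0 := by
  change S.map ((fun x : LS => x.coeff k) ∘ ccA) = _
  rw [← Matrix.map_map (f := ccA), hScc]
  split_ifs with hk
  · exact Matrix.map_one _ (HahnSeries.coeff_zero) (by simp [hk])
  · ext i j
    rw [Matrix.map_apply, Matrix.one_apply]
    split_ifs <;> simp [HahnSeries.coeff_one, hk]

lemma map_hCoeff_zero_eq_one (hΩ : ∀ a, MatRegH (Ω a)) (hP : ∀ a, MatRegH (P a))
    (hS : MatRegH S) (hScc : S.map ccA = 1)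
    (hSeq : ∀ a, hbarA r • thetaMat a S + Ω a * S - S * P a = 0) :
    S.map (hCoeff r 0) = 1 := by
  have htheta : ∀ a i j, thetaC a (S.map (hCoeff r 0) i j) = 0 := fun a i j => by
    have h := map_hCoeff_of_hbarA_smul_thetaMat_add_sub_eq_zero (hSeq a) (-1)
    rw [((hΩ a).mul hS).map_hCoeff_of_neg (by norm_num),
      (hS.mul (hP a)).map_hCoeff_of_neg (by norm_num), add_zero, sub_zero] at h
    exact congrFun (congrFun h i) j
  calc S.map (hCoeff r 0)
      = ((S.map (hCoeff r 0)).map MvPowerSeries.constantCoeff).map MvPowerSeries.C :=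
        Matrix.ext fun i j => eq_C_constantCoeff_of_thetaC_eq_zero fun a => htheta a i j
    _ = 1 := by
        rw [map_constantCoeff_map_hCoeff hScc, if_pos rfl,
          Matrix.map_one _ (map_zero _) (map_one _)]

lemma mulVec_map_hCoeff_one_eq_zero (hΩ : ∀ a, MatRegH (Ω a)) (hP : ∀ a, MatRegH (P a))
    (hS : MatRegH S) (hScc : S.map ccA = 1)
    (hSeq : ∀ a, hbarA r • thetaMat a S + Ω a * S - S * P a = 0) {e : Fin n → ℂ}
    (he : ∀ a, Ω a *ᵥ (fun i => cA r (e i)) = P a *ᵥ (fun i => cA r (e i))) :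
    S.map (hCoeff r 1) *ᵥ (fun i => MvPowerSeries.C (e i)) = 0 := by
  have hS0 := map_hCoeff_zero_eq_one hΩ hP hS hScc hSeq
  have htheta : ∀ a, (S.map (hCoeff r 1)).map (thetaC a) =
      (P a).map (hCoeff r 0) - (Ω a).map (hCoeff r 0) := fun a => by
    have h := map_hCoeff_of_hbarA_smul_thetaMat_add_sub_eq_zero (hSeq a) 0
    rw [zero_add, (hΩ a).map_hCoeff_zero_mul hS, hS.map_hCoeff_zero_mul (hP a), hS0,
      Matrix.mul_one, Matrix.one_mul] at h
    rw [← sub_eq_zero, ← h]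
    abel
  funext i
  rw [eq_C_constantCoeff_of_thetaC_eq_zero
    (f := (S.map (hCoeff r 1) *ᵥ fun i => MvPowerSeries.C (e i)) i) fun a => ?_]
  · rw [RingHom.map_mulVec, map_constantCoeff_map_hCoeff hScc, if_neg one_ne_zero, zero_mulVec,
      Pi.zero_apply, map_zero, Pi.zero_apply]
  · rw [thetaC_mulVec_C, htheta, sub_mulVec, Pi.sub_apply, ← hCoeff_mulVec_cA, ← hCoeff_mulVec_cA,
      he, sub_self]

lemma hCoeff_mulVec_of_mul_eq_one {T : Matrix (Fin n) (Fin n) (AA r)} (hS : MatRegH S)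
    (hT : MatRegH T) (hTS : T * S = 1) (hS0 : S.map (hCoeff r 0) = 1) {e : Fin n → ℂ}
    (hSe : S.map (hCoeff r 1) *ᵥ (fun i => MvPowerSeries.C (e i)) = 0) {k : ℤ} (hk : k < 2)
    (i : Fin n) :
    hCoeff r k ((T *ᵥ fun j => cA r (e j)) i) = if k = 0 then MvPowerSeries.C (e i) else 0 := by
  have hT0 : T.map (hCoeff r 0) = 1 := by
    have h := hT.map_hCoeff_zero_mul hS
    rwa [hTS, map_hCoeff_one, if_pos rfl, hS0, Matrix.mul_one, eq_comm] at h
  have hT1 : T.map (hCoeff r 1) = -S.map (hCoeff r 1) := by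
    have h := hT.map_hCoeff_one_mul hS
    rw [hTS, map_hCoeff_one, if_neg one_ne_zero, hS0, hT0, Matrix.one_mul, Matrix.mul_one] at h
    exact eq_neg_of_add_eq_zero_right h.symm
  rw [hCoeff_mulVec_cA]
  rcases lt_trichotomy k 0 with hneg | rfl | hpos
  · rw [hT.map_hCoeff_of_neg hneg, zero_mulVec, if_neg hneg.ne]
    rfl
  · rw [hT0, one_mulVec, if_pos rfl]
  · obtain rfl : k = 1 := by omega
    rw [hT1, neg_mulVec, hSe, neg_zero, if_neg one_ne_zero]
    rfl

end CanonicalFrame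

theorem canonical_J_asymptotics_general {r n : ℕ}
    (Ω : Fin r → Matrix (Fin n) (Fin n) (AA r))
    (hconst : ∀ a, MatConstH (Ω a))
    (p : Fin r → Matrix (Fin n) (Fin n) ℂ)
    (e0 : Fin n → ℂ)
    (he0 : ∀ a, (Ω a).mulVec (fun i => cA r (e0 i)) =
      ((p a).map (cA r)).mulVec (fun i => cA r (e0 i)))
    (S : Matrix (Fin n) (Fin n) (AA r))
    (hSreg : MatRegH S)
    (hScc : S.map ccA = 1)
    (hSeq : ∀ a, hbarA r • thetaMat a S + Ω a * S - S * (p a).map (cA r) = 0) :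
    (∀ i j d, (S i j d).coeff 0 =
      MvPowerSeries.coeff d ((1 : Matrix (Fin n) (Fin n) (MvPowerSeries (Fin r) ℂ)) i j)) ∧
    (∀ T : Matrix (Fin n) (Fin n) (AA r), S * T = 1 → T * S = 1 →
      ∀ k : ℤ, k < 2 → ∀ i d,
        ((T.mulVec (fun i => cA r (e0 i)) i) d).coeff k =
          if k = 0 then MvPowerSeries.coeff d ((MvPowerSeries.C : ℂ →+* MvPowerSeries (Fin r) ℂ) (e0 i))
          else 0) := by
  have hΩ : ∀ a, MatRegH (Ω a) := fun a i j d => (hconst a i j d).isRegH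
  have hP : ∀ a, MatRegH ((p a).map (cA r)) := fun a i j => isRegA_cA (p a i j)
  have hS0 := map_hCoeff_zero_eq_one hΩ hP hSreg hScc hSeq
  refine ⟨fun i j d => by rw [← hS0]; rfl, fun T hST hTS k hk i d => ?_⟩
  have h := hCoeff_mulVec_of_mul_eq_one hSreg (hSreg.of_mul_eq_one hScc hST) hTS hS0
    (mulVec_map_hCoeff_one_eq_zero hΩ hP hSreg hScc hSeq he0) hk i
  have hd := congrArg (MvPowerSeries.coeff d) h
  rwa [apply_ite (MvPowerSeries.coeff d), map_zero] at hd

/-- **Asymptotics of the canonical `J`-function** (computation before equation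
(3.9) in the paper).  Let `Ω_a ∈ Mat_n(ℂ[[q]])` with `p_a = Ω_a|_{q=0}`, let
`e₀` satisfy `Ω_a e₀ = p_a e₀` for all `a` (compatibility of the canonical
frame and coordinates), and let `S ∈ Mat_n(ℂ[[ħ⁻¹]][[q]])` be invertible with
`S|_{q=0} = Id` and `ħθ_a S + Ω_a S − S p_a = 0`.  Then `S ≡ Id (mod ħ⁻¹)`,
and writing `S⁻¹ = Id + ħ⁻¹S₁ + ⋯` one has `S₁e₀ = 0`; equivalently
`S⁻¹e₀ ≡ e₀ (mod ħ⁻²)`. -/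
theorem canonical_J_asymptotics {r n : ℕ} (hr : 1 ≤ r) (hn : 1 ≤ n)
    (Ω : Fin r → Matrix (Fin n) (Fin n) (AA r))
    (hconst : ∀ a, MatConstH (Ω a))
    (p : Fin r → Matrix (Fin n) (Fin n) ℂ)
    (hp : ∀ a i j, ccA (Ω a i j) = HahnSeries.C (p a i j))
    (e0 : Fin n → ℂ)
    (he0 : ∀ a, (Ω a).mulVec (fun i => cA r (e0 i)) =
      ((p a).map (cA r)).mulVec (fun i => cA r (e0 i)))
    (S : Matrix (Fin n) (Fin n) (AA r))
    (hSreg : MatRegH S)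
    (hScc : S.map ccA = 1)
    (hSunit : IsUnit S)
    (hSeq : ∀ a, hbarA r • thetaMat a S + Ω a * S - S * (p a).map (cA r) = 0) :
    (∀ i j d, (S i j d).coeff 0 =
      MvPowerSeries.coeff d ((1 : Matrix (Fin n) (Fin n) (MvPowerSeries (Fin r) ℂ)) i j)) ∧
    (∀ T : Matrix (Fin n) (Fin n) (AA r), S * T = 1 → T * S = 1 →
      ∀ k : ℤ, k < 2 → ∀ i d,
        ((T.mulVec (fun i => cA r (e0 i)) i) d).coeff k =
          if k = 0 then MvPowerSeries.coeff d ((MvPowerSeries.C : ℂ →+* MvPowerSeries (Fin r) ℂ) (e0 i))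
          else 0) :=
  canonical_J_asymptotics_general Ω hconst p e0 he0 S hSreg hScc hSeq
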